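/- For q ≥ 2, define s_q : ℕ → ℕ by s_q(0) = 0 and s_q(p) = s_q(p−1) + ⌈(s_q(p−1)+1)/(q−1)⌉. Then for all p ≥ 1 and z ∈ {0,1}, (s_q(p) + z) − ⌈(s_q(p) + z)/q⌉ = s_q(p−1) + z. -/

import Mathlib

/-!
Write `m = q - 1` and `s = m d + r` with `r < m`. One step of the recursion adds
`⌈(s + 1)/m⌉ = d + 1`, giving `t = q d + r + 1`, and for `z ≤ 1` the number `t + z` lies in
`(q d, q (d + 1)]` because `r + 1 + z ≤ m + 1 = q`.
Hence `⌈(t + z)/q⌉ = d + 1` is exactly what the step added.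
-/

/-- `s_q(0) = 0`, `s_q(p) = s_q(p−1) + ⌈(s_q(p−1)+1)/(q−1)⌉` (for `q ≥ 2`,
`⌈(s+1)/(q−1)⌉ = (s + q - 1)/(q - 1)` in natural-number division). -/
def sfun (q : ℕ) : ℕ → ℕ
  | 0 => 0
  | p + 1 => sfun q p + (sfun q p + q - 1) / (q - 1)

theorem ceil_div_succ_add_div_add_one {m : ℕ} (hm : 0 < m) (s : ℕ) {z : ℕ} (hz : z ≤ 1) :
    (s + s / m + 1 + z + m) / (m + 1) = s / m + 1 := by
  have hs := Nat.div_add_mod s m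
  have hr := Nat.mod_lt s hm
  generalize s / m = d at *
  generalize s % m = r at *
  subst hs
  calc (m * d + r + d + 1 + z + m) / (m + 1)
      = (r + z + m + 1 + (m + 1) * d) / (m + 1) := by congr 1; ring
    _ = (r + z + m + 1) / (m + 1) + d := Nat.add_mul_div_left _ _ (by omega)
    _ = d + 1 := by rw [Nat.div_eq_of_lt_le (k := 1) (by omega) (by omega)]; omega

theorem add_ceil_div_pred_sub_ceil_div {q : ℕ} (hq : 2 ≤ q) (s : ℕ) {z : ℕ} (hz : z ≤ 1) :
    (s + (s + q - 1) / (q - 1) + z) - (s + (s + q - 1) / (q - 1) + z + q - 1) / q = s + z := by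
  obtain ⟨m, rfl⟩ : ∃ m, q = m + 1 := ⟨q - 1, by omega⟩
  have hm : 0 < m := by omega
  have hstep : (s + (m + 1) - 1) / (m + 1 - 1) = s / m + 1 := by
    rw [Nat.add_succ_sub_one, Nat.add_sub_cancel, Nat.add_div_right _ hm]
  rw [hstep, Nat.add_succ_sub_one, ← Nat.add_assoc, ceil_div_succ_add_div_add_one hm s hz]
  omega

/-- For `q ≥ 2`, `p ≥ 1` and `z ∈ {0,1}`:
`(s_q(p) + z) − ⌈(s_q(p) + z)/q⌉ = s_q(p−1) + z`
(with `⌈a/q⌉ = (a + q − 1)/q`). -/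
theorem sfun_sub_ceil (q : ℕ) (hq : 2 ≤ q) (p : ℕ) (hp : 1 ≤ p) (z : ℕ) (hz : z ≤ 1) :
    (sfun q p + z) - (sfun q p + z + q - 1) / q = sfun q (p - 1) + z := by
  obtain ⟨p, rfl⟩ : ∃ p', p = p' + 1 := ⟨p - 1, by omega⟩
  exact add_ceil_div_pred_sub_ceil_div hq (sfun q p) hz
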